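/- Let n ≥ 3, 3 ≤ k ≤ n and m ≥ 1 be integers, and for each r ∈ {1,…,m} let (h^r_{ij})_{1≤i,j≤n} be a symmetric real n×n matrix. Then Σ_{r=1}^{m} [ Σ_{1≤i<j≤n} ( h^r_{ii}h^r_{jj} − (h^r_{ij})² ) − (1/(k−1)) Σ_{i=2}^{k} ( h^r_{11}h^r_{ii} − (h^r_{1i})² ) ] ≤ ((n−2)/(2(n−1))) · Σ_{r=1}^{m} ( Σ_{i=1}^{n} h^r_{ii} )². -/

import Mathlib

/-!
Write `a i = b i i`, `q = #I` and `N` for the number of indices. The subtracted entries `b z i`,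
`i ∈ I`, occur among the `b i j` with `i < j` and carry weight `1 / q ≤ 1`, so the off-diagonal
terms only help. Since `2 ∑_{i<j} a i a j = (∑ a)² - ∑ a²`, the diagonal part of the claim is
`(∑ a)² ≤ (N - 1) (∑ a² + (2 / q) a z ∑_{i ∈ I} a i)`. This is Cauchy–Schwarz over the `N - 1`
indices `i ≠ z` for the vector `a i + [i ∈ I] a z / q`: it has the same sum as `a`, and its sum of
squares falls short of the bracket by `(1 - 1 / q) a z² ≥ 0`.
-/

open Finset

theorem two_mul_sum_lt_mul_eq_sq_sum_sub_sum_sq {ι : Type*} [Fintype ι] [LinearOrder ι]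
    (a : ι → ℝ) :
    2 * ∑ i, ∑ j, (if i < j then a i * a j else 0) = (∑ i, a i) ^ 2 - ∑ i, a i ^ 2 := by
  have hswap : ∑ i, ∑ j, (if j < i then a i * a j else 0) =
      ∑ i, ∑ j, (if i < j then a i * a j else 0) := by
    rw [sum_comm]; simp only [mul_comm]
  have hdiag : ∑ i, ∑ j, (if i = j then a i * a j else 0) = ∑ i, a i ^ 2 := by
    simp [sq]
  have htri : ∀ i j, a i * a j = (if i < j then a i * a j else 0) +
      (if j < i then a i * a j else 0) + (if i = j then a i * a j else 0) := by
    intro i j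
    rcases lt_trichotomy i j with h | rfl | h
    · simp [h, h.not_gt, h.ne]
    · simp
    · simp [h, h.not_gt, h.ne']
  rw [sq, sum_mul_sum, ← hdiag,
    sum_congr rfl fun i _ => sum_congr rfl fun j _ => htri i j]
  simp only [sum_add_distrib, hswap]
  ring

theorem sum_sq_le_sum_sum_lt_sq {ι : Type*} [Fintype ι] [LinearOrder ι] (b : ι → ι → ℝ)
    {z : ι} {I : Finset ι} (hzI : ∀ i ∈ I, z < i) :
    ∑ i ∈ I, b z i ^ 2 ≤ ∑ i, ∑ j, (if i < j then b i j ^ 2 else 0) :=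
  calc ∑ i ∈ I, b z i ^ 2 = ∑ j ∈ I, (if z < j then b z j ^ 2 else 0) :=
        sum_congr rfl fun j hj => (if_pos (hzI j hj)).symm
    _ ≤ ∑ j, (if z < j then b z j ^ 2 else 0) :=
        sum_le_sum_of_subset_of_nonneg (subset_univ I) fun j _ _ => by positivity
    _ ≤ ∑ i, ∑ j, (if i < j then b i j ^ 2 else 0) :=
        single_le_sum (f := fun i => ∑ j, (if i < j then b i j ^ 2 else 0))
          (fun i _ => sum_nonneg fun j _ => by positivity) (mem_univ z)

theorem sq_sum_le_card_sub_one_mul {ι : Type*} [Fintype ι] [DecidableEq ι] (a : ι → ℝ)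
    {z : ι} {I : Finset ι} (hz : z ∉ I) (hI : I.Nonempty) :
    (∑ i, a i) ^ 2 ≤
      (Fintype.card ι - 1 : ℝ) * (∑ i, a i ^ 2 + 2 / #I * a z * ∑ i ∈ I, a i) := by
  set q : ℝ := (#I : ℝ)
  have hq : 1 ≤ q := Nat.one_le_cast.2 hI.card_pos
  let x i := a i + if i ∈ I then a z / q else 0
  have hx_sum : ∑ i ∈ univ.erase z, x i = ∑ i, a i := by
    simp only [x, sum_add_distrib, sum_ite_mem, sum_erase_eq_sub (mem_univ z), if_neg hz,
      univ_inter, sum_const, nsmul_eq_mul]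
    field_simp
    ring
  have hx_sq : ∀ i,
      x i ^ 2 = a i ^ 2 + if i ∈ I then 2 / q * a z * a i + (a z / q) ^ 2 else 0 := by
    intro i; simp only [x]; split_ifs <;> ring
  have hx_sum_sq : ∑ i ∈ univ.erase z, x i ^ 2 =
      ∑ i, a i ^ 2 - a z ^ 2 + 2 / q * a z * ∑ i ∈ I, a i + a z ^ 2 / q := by
    simp only [hx_sq, sum_add_distrib, sum_ite_mem, sum_erase_eq_sub (mem_univ z), if_neg hz,
      univ_inter, sum_const, nsmul_eq_mul, ← mul_sum]
    field_simp
    ring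
  have hcard : (#(univ.erase z) : ℝ) = Fintype.card ι - 1 := by
    rw [card_erase_of_mem (mem_univ z), card_univ, Nat.cast_sub (Fintype.card_pos_iff.2 ⟨z⟩),
      Nat.cast_one]
  calc (∑ i, a i) ^ 2 = (∑ i ∈ univ.erase z, x i) ^ 2 := by rw [hx_sum]
    _ ≤ #(univ.erase z) * ∑ i ∈ univ.erase z, x i ^ 2 := sq_sum_le_card_mul_sum_sq
    _ ≤ (Fintype.card ι - 1 : ℝ) * (∑ i, a i ^ 2 + 2 / q * a z * ∑ i ∈ I, a i) := by
      rw [hcard, hx_sum_sq]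
      have hz_sq : a z ^ 2 / q ≤ a z ^ 2 := div_le_self (sq_nonneg _) hq
      have hN : (0 : ℝ) ≤ Fintype.card ι - 1 := by
        rw [← hcard]; positivity
      exact mul_le_mul_of_nonneg_left (by linarith) hN

theorem sum_lt_minor_sub_inv_card_mul_sum_minor_le {ι : Type*} [Fintype ι] [LinearOrder ι]
    (b : ι → ι → ℝ) {z : ι} {I : Finset ι} (hzI : ∀ i ∈ I, z < i) (hI : I.Nonempty) :
    (∑ i, ∑ j, if i < j then b i i * b j j - b i j ^ 2 else 0)
        - 1 / #I * ∑ i ∈ I, (b z z * b i i - b z i ^ 2)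
      ≤ (Fintype.card ι - 2 : ℝ) / (2 * (Fintype.card ι - 1)) * (∑ i, b i i) ^ 2 := by
  have hq : (1 : ℝ) ≤ #I := Nat.one_le_cast.2 hI.card_pos
  have hN : (2 : ℝ) ≤ Fintype.card ι := by
    obtain ⟨i, hi⟩ := hI
    have : 2 ≤ Fintype.card ι := Fintype.one_lt_card_iff.2 ⟨z, i, (hzI i hi).ne⟩
    exact_mod_cast this
  have hpair := two_mul_sum_lt_mul_eq_sq_sum_sub_sum_sq fun i => b i i
  have hdiag := sq_sum_le_card_sub_one_mul (fun i => b i i) (fun hz => lt_irrefl z (hzI z hz)) hI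
  have hoff := sum_sq_le_sum_sum_lt_sq b hzI
  have hoff' : 1 / #I * ∑ i ∈ I, b z i ^ 2 ≤ ∑ i ∈ I, b z i ^ 2 := by
    rw [one_div_mul_eq_div]
    exact div_le_self (sum_nonneg fun i _ => sq_nonneg _) hq
  have hsplit : (∑ i, ∑ j, if i < j then b i i * b j j - b i j ^ 2 else 0) =
      (∑ i, ∑ j, if i < j then b i i * b j j else 0) -
        ∑ i, ∑ j, if i < j then b i j ^ 2 else 0 := by
    simp only [← sum_sub_distrib]
    refine sum_congr rfl fun i _ => sum_congr rfl fun j _ => ?_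
    split_ifs <;> ring
  beta_reduce at hpair hdiag
  rw [hsplit, sum_sub_distrib, ← mul_sum, mul_sub]
  calc _ ≤ (∑ i, ∑ j, if i < j then b i i * b j j else 0) -
          1 / #I * (b z z * ∑ i ∈ I, b i i) := by
        linarith
    _ ≤ (Fintype.card ι - 2 : ℝ) / (2 * (Fintype.card ι - 1)) * (∑ i, b i i) ^ 2 := by
        rw [div_mul_eq_mul_div (Fintype.card ι - 2 : ℝ), le_div_iff₀ (by linarith)]
        linear_combination hdiag + (Fintype.card ι - 1 : ℝ) * hpair

theorem Fin.card_filter_le_val_lt {n l k : ℕ} (hkn : k ≤ n) :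
    #{i : Fin n | l ≤ (i : ℕ) ∧ (i : ℕ) < k} = k - l := by
  rw [← card_map Fin.valEmbedding, ← Nat.card_Ico]
  congr 1
  ext x
  simp only [mem_map, mem_filter, mem_univ, true_and, Fin.valEmbedding_apply, mem_Ico]
  exact ⟨by rintro ⟨i, hi, rfl⟩; exact hi, fun hx => ⟨⟨x, by omega⟩, hx, rfl⟩⟩

theorem stmt_5 (n k m : ℕ) (hk : 3 ≤ k) (hkn : k ≤ n)
    (h : Fin m → Fin n → Fin n → ℝ) :
    ∑ r : Fin m,
        ((∑ i : Fin n, ∑ j : Fin n, if i < j then h r i i * h r j j - (h r i j) ^ 2 else 0)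
          - (1 / ((k : ℝ) - 1)) *
            (∑ i : Fin n, if 1 ≤ (i : ℕ) ∧ (i : ℕ) < k then
                h r ⟨0, by omega⟩ ⟨0, by omega⟩ * h r i i - (h r ⟨0, by omega⟩ i) ^ 2
              else 0))
      ≤ ((n : ℝ) - 2) / (2 * ((n : ℝ) - 1)) * ∑ r : Fin m, (∑ i : Fin n, h r i i) ^ 2 := by
  have hcard : #{i : Fin n | 1 ≤ (i : ℕ) ∧ (i : ℕ) < k} = k - 1 := Fin.card_filter_le_val_lt hkn
  have hzI : ∀ i ∈ ({i : Fin n | 1 ≤ (i : ℕ) ∧ (i : ℕ) < k} : Finset (Fin n)),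
      (⟨0, by omega⟩ : Fin n) < i :=
    fun i hi => Fin.lt_def.2 (mem_filter.1 hi).2.1
  rw [mul_sum]
  refine sum_le_sum fun r _ => ?_
  have := sum_lt_minor_sub_inv_card_mul_sum_minor_le (h r) hzI (card_pos.1 (by omega))
  rwa [hcard, Nat.cast_pred (by omega), Fintype.card_fin, sum_filter] at this
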